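/- Truth lemma for the canonical model: for every node Γ' ⇒ Δ' of the saturation of an NSMB-unprovable nested-sequent, if A ∈ Γ' then A is true at the world Γ' ⇒ Δ' of the canonical model (S_C, R_C, P_C, V_C), and if A ∈ Δ' then A is false at that world. -/

import Mathlib

set_option maxHeartbeats 1000000

namespace MBQL

/-- The fixed finite set `J ⊆ [0,1]` of inner-product values, with `0, 1 ∈ J`. -/
structure MBParams where
  J : Set ℝ
  finite : J.Finite
  subI : J ⊆ Set.Icc (0:ℝ) 1
  zero_mem : (0:ℝ) ∈ J
  one_mem : (1:ℝ) ∈ J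

/-- Formulas of **MB**: `A ::= p | ⊤ | ⊥ | ¬A | A∧A | □^c_α A | □^o_α A` (α ∈ J). -/
inductive MBForm (Pm : MBParams) : Type
  | var : ℕ → MBForm Pm
  | top : MBForm Pm
  | bot : MBForm Pm
  | neg : MBForm Pm → MBForm Pm
  | conj : MBForm Pm → MBForm Pm → MBForm Pm
  | boxc : Pm.J → MBForm Pm → MBForm Pm
  | boxo : Pm.J → MBForm Pm → MBForm Pm

noncomputable instance {Pm : MBParams} : DecidableEq (MBForm Pm) := Classical.decEq _

/-- Valuation of a formula, given worlds `S`, a relation `R : S → S → ℝ` and a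
valuation `V` of the propositional variables. -/
def MBForm.valR {Pm : MBParams} {S : Type} (R : S → S → ℝ) (V : ℕ → Set S) :
    MBForm Pm → Set S
  | .var n => V n
  | .top => Set.univ
  | .bot => ∅
  | .neg A => (A.valR R V)ᶜ
  | .conj A B => A.valR R V ∩ B.valR R V
  | .boxc α A => {s | ∀ t, (α : ℝ) ≤ R s t → t ∈ A.valR R V}
  | .boxo α A => {s | ∀ t, (α : ℝ) < R s t → t ∈ A.valR R V}

/-- An EQL-frame. -/
structure EQLFrame where
  S : Type
  nonempty : Nonempty S
  R : S → S → ℝ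
  mem_Icc : ∀ s t, R s t ∈ Set.Icc (0:ℝ) 1
  eq_one_iff : ∀ s t, (R s t = 1 ↔ s = t)
  symm : ∀ s t, R s t = R t s

/-- An MB-realization. -/
structure MBRealization (Pm : MBParams) where
  F : EQLFrame
  P : Set (Set F.S)
  univ_mem : Set.univ ∈ P
  empty_mem : ∅ ∈ P
  inter_mem : ∀ X ∈ P, ∀ Y ∈ P, X ∩ Y ∈ P
  compl_mem : ∀ X ∈ P, Xᶜ ∈ P
  boxc_mem : ∀ α ∈ Pm.J, ∀ X ∈ P, {s | ∀ t, α ≤ F.R s t → t ∈ X} ∈ P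
  boxo_mem : ∀ α ∈ Pm.J, ∀ X ∈ P, {s | ∀ t, α < F.R s t → t ∈ X} ∈ P
  V : ℕ → Set F.S
  V_mem : ∀ n, V n ∈ P

/-- The extended valuation of a formula in an MB-realization. -/
def MBRealization.val {Pm : MBParams} (M : MBRealization Pm) (A : MBForm Pm) :
    Set M.F.S := A.valR M.F.R M.V

/-- Validity of an MB-formula. -/
def MBValid {Pm : MBParams} (A : MBForm Pm) : Prop :=
  ∀ (M : MBRealization Pm) (s : M.F.S), s ∈ M.val A

inductive Side : Type
  | c : Side
  | o : Side
deriving DecidableEq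

/-- A label `(α, d)` on a modal bracket, with `α ∈ J − {1}`. -/
structure MBLab (Pm : MBParams) where
  α : ℝ
  memJ : α ∈ Pm.J
  ne_one : α ≠ 1
  d : Side

mutual
/-- Nested-sequents: a finite tree whose nodes are sequents (pairs of finite
sets of formulas) and whose edges carry labels. -/
inductive NSeq (Pm : MBParams) : Type
  | node : Finset (MBForm Pm) → Finset (MBForm Pm) → NSeqs Pm → NSeq Pm
/-- A finite list of labelled child nested-sequents. -/
inductive NSeqs (Pm : MBParams) : Type
  | nil : NSeqs Pm
  | cons : MBLab Pm → NSeq Pm → NSeqs Pm → NSeqs Pm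
end

/-- The `i`-th labelled child. -/
def NSeqs.get {Pm : MBParams} : NSeqs Pm → ℕ → Option (MBLab Pm × NSeq Pm)
  | .nil, _ => none
  | .cons l t _, 0 => some (l, t)
  | .cons _ _ ts, n+1 => ts.get n

/-- `SubAt t p u`: the subtree of `t` at the path (node address) `p` is `u`. -/
inductive SubAt {Pm : MBParams} : NSeq Pm → List ℕ → NSeq Pm → Prop
  | here (t : NSeq Pm) : SubAt t [] t
  | there {Γ Δ : Finset (MBForm Pm)} {ts : NSeqs Pm} {i : ℕ} {l : MBLab Pm}
      {u v : NSeq Pm} {p : List ℕ} :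
      NSeqs.get ts i = some (l, u) → SubAt u p v → SubAt (.node Γ Δ ts) (i :: p) v

/-- `p` is (the address of) a node of `t`. -/
def IsNode {Pm : MBParams} (t : NSeq Pm) (p : List ℕ) : Prop := ∃ u, SubAt t p u

mutual
/-- Replace the sequent at the node with address `p` by `Γ' ⇒ Δ'`
(children are kept). -/
def NSeq.setSeq {Pm : MBParams} :
    NSeq Pm → List ℕ → Finset (MBForm Pm) → Finset (MBForm Pm) → NSeq Pm
  | .node _ _ ts, [], Γ', Δ' => .node Γ' Δ' ts
  | .node Γ Δ ts, i :: p, Γ', Δ' => .node Γ Δ (NSeqs.setSeqs ts i p Γ' Δ')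
def NSeqs.setSeqs {Pm : MBParams} :
    NSeqs Pm → ℕ → List ℕ → Finset (MBForm Pm) → Finset (MBForm Pm) → NSeqs Pm
  | .nil, _, _, _, _ => .nil
  | .cons l t ts, 0, p, Γ', Δ' => .cons l (t.setSeq p Γ' Δ') ts
  | .cons l t ts, n+1, p, Γ', Δ' => .cons l t (NSeqs.setSeqs ts n p Γ' Δ')
end

/-- Append a labelled child at the end of a children list. -/
def NSeqs.snoc {Pm : MBParams} : NSeqs Pm → MBLab Pm → NSeq Pm → NSeqs Pm
  | .nil, l, u => .cons l u .nil
  | .cons l' t ts, l, u => .cons l' t (ts.snoc l u)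

mutual
/-- Add a new child `[u]_l` at the node with address `p`. -/
def NSeq.addChild {Pm : MBParams} : NSeq Pm → List ℕ → MBLab Pm → NSeq Pm → NSeq Pm
  | .node Γ Δ ts, [], l, u => .node Γ Δ (ts.snoc l u)
  | .node Γ Δ ts, i :: p, l, u => .node Γ Δ (NSeqs.addChilds ts i p l u)
def NSeqs.addChilds {Pm : MBParams} : NSeqs Pm → ℕ → List ℕ → MBLab Pm → NSeq Pm → NSeqs Pm
  | .nil, _, _, _, _ => .nil
  | .cons l' t ts, 0, p, l, u => .cons l' (t.addChild p l u) ts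
  | .cons l' t ts, n+1, p, l, u => .cons l' t (NSeqs.addChilds ts n p l u)
end


/-- Logical connectives defined by abbreviation: `A ∨ B`. -/
def MBForm.or {Pm : MBParams} (A B : MBForm Pm) : MBForm Pm := .neg (.conj (.neg A) (.neg B))

/-- `A → B := ¬A ∨ B`. -/
def MBForm.imp {Pm : MBParams} (A B : MBForm Pm) : MBForm Pm := (MBForm.neg A).or B

/-- Conjunction of a list of formulas. -/
def conjList {Pm : MBParams} : List (MBForm Pm) → MBForm Pm
  | [] => .top
  | [A] => A
  | A :: B :: rest => .conj A (conjList (B :: rest))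

/-- Disjunction of a list of formulas. -/
def disjList {Pm : MBParams} : List (MBForm Pm) → MBForm Pm
  | [] => .bot
  | [A] => A
  | A :: B :: rest => (A).or (disjList (B :: rest))

/-- `⋀Γ → ⋁Δ`. -/
noncomputable def seqForm {Pm : MBParams} (Γ Δ : Finset (MBForm Pm)) : MBForm Pm :=
  (conjList Γ.toList).imp (disjList Δ.toList)

/-- The box corresponding to a bracket label. -/
def MBLab.box {Pm : MBParams} (l : MBLab Pm) (A : MBForm Pm) : MBForm Pm :=
  match l.d with
  | .c => .boxc ⟨l.α, l.memJ⟩ A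
  | .o => .boxo ⟨l.α, l.memJ⟩ A

mutual
/-- The interpretation `τ` of a nested-sequent as a formula. -/
noncomputable def NSeq.tau {Pm : MBParams} : NSeq Pm → MBForm Pm
  | .node Γ Δ ts => NSeqs.tauAux (seqForm Γ Δ) ts
noncomputable def NSeqs.tauAux {Pm : MBParams} : MBForm Pm → NSeqs Pm → MBForm Pm
  | A, .nil => A
  | A, .cons l t ts => NSeqs.tauAux (A.or (l.box t.tau)) ts
end

/-- `E` is an embedding of the nested-sequent `t` into the realization `M`
(`E` is given on node addresses). -/
def IsEmb {Pm : MBParams} (M : MBRealization Pm) (t : NSeq Pm)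
    (E : List ℕ → M.F.S) : Prop :=
  ∀ p Γ Δ ts i l u, SubAt t p (.node Γ Δ ts) → NSeqs.get ts i = some (l, u) →
    (l.d = Side.c → l.α ≤ M.F.R (E p) (E (p ++ [i]))) ∧
    (l.d = Side.o → l.α < M.F.R (E p) (E (p ++ [i])))

/-- The nested-sequent `t` is false in `M` under `E`. -/
def FalseUnder {Pm : MBParams} (M : MBRealization Pm) (t : NSeq Pm)
    (E : List ℕ → M.F.S) : Prop :=
  ∀ p Γ Δ ts, SubAt t p (.node Γ Δ ts) →
    (∀ A ∈ Γ, E p ∈ M.val A) ∧ (∀ A ∈ Δ, E p ∉ M.val A)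

/-- Validity of a nested-sequent: it is not false under any embedding into
any MB-realization. -/
def NSValid {Pm : MBParams} (t : NSeq Pm) : Prop :=
  ∀ (M : MBRealization Pm) (E : List ℕ → M.F.S), IsEmb M t E → ¬ FalseUnder M t E


/-- `□^d_α A`. -/
def mkBox {Pm : MBParams} (d : Side) (α : Pm.J) (A : MBForm Pm) : MBForm Pm :=
  match d with
  | .c => .boxc α A
  | .o => .boxo α A

/-- The total order `⪯` on `I × {c,o}`: `pleq α d β d'` means `(α,d) ⪯ (β,d')`. -/
def pleq : ℝ → Side → ℝ → Side → Prop
  | α, .o, β, .c => α < β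
  | α, _, β, _ => α ≤ β

/-- Provability in the nested-sequent calculus **NSMB**.  The boolean
parameter records whether the rule (cut) may be used. -/
inductive Provable {Pm : MBParams} : Bool → NSeq Pm → Prop
  /-- axiom `‖A, Γ ⇒ Δ, A, T‖` -/
  | axId {cut : Bool} {t : NSeq Pm} {p Γ Δ ts A} :
      SubAt t p (.node Γ Δ ts) → A ∈ Γ → A ∈ Δ → Provable cut t
  /-- axiom `‖Γ ⇒ Δ, ⊤, T‖` -/
  | axTop {cut : Bool} {t : NSeq Pm} {p Γ Δ ts} :
      SubAt t p (.node Γ Δ ts) → MBForm.top ∈ Δ → Provable cut t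
  /-- axiom `‖⊥, Γ ⇒ Δ, T‖` -/
  | axBot {cut : Bool} {t : NSeq Pm} {p Γ Δ ts} :
      SubAt t p (.node Γ Δ ts) → MBForm.bot ∈ Γ → Provable cut t
  /-- axiom `‖Γ ⇒ Δ, □^o_1 A, T‖` -/
  | axBoxO1 {cut : Bool} {t : NSeq Pm} {p Γ Δ ts A} :
      SubAt t p (.node Γ Δ ts) → MBForm.boxo ⟨1, Pm.one_mem⟩ A ∈ Δ → Provable cut t
  /-- rule (cut) -/
  | cutR {t : NSeq Pm} {p Γ Δ ts A} :
      SubAt t p (.node Γ Δ ts) →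
      Provable true (t.setSeq p Γ (insert A Δ)) →
      Provable true (t.setSeq p (insert A Γ) Δ) →
      Provable true t
  /-- rule (wL) -/
  | wL {cut : Bool} {t : NSeq Pm} {p Γ Δ ts A} :
      SubAt t p (.node Γ Δ ts) → Provable cut t →
      Provable cut (t.setSeq p (insert A Γ) Δ)
  /-- rule (wR) -/
  | wR {cut : Bool} {t : NSeq Pm} {p Γ Δ ts A} :
      SubAt t p (.node Γ Δ ts) → Provable cut t →
      Provable cut (t.setSeq p Γ (insert A Δ))
  /-- rule (¬L) -/
  | negL {cut : Bool} {t : NSeq Pm} {p Γ Δ ts A} :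
      SubAt t p (.node Γ Δ ts) →
      Provable cut (t.setSeq p Γ (insert A Δ)) →
      Provable cut (t.setSeq p (insert (MBForm.neg A) Γ) Δ)
  /-- rule (¬R) -/
  | negR {cut : Bool} {t : NSeq Pm} {p Γ Δ ts A} :
      SubAt t p (.node Γ Δ ts) →
      Provable cut (t.setSeq p (insert A Γ) Δ) →
      Provable cut (t.setSeq p Γ (insert (MBForm.neg A) Δ))
  /-- rule (∧L) -/
  | andL {cut : Bool} {t : NSeq Pm} {p Γ Δ ts A B} :
      SubAt t p (.node Γ Δ ts) →
      Provable cut (t.setSeq p (insert A (insert B Γ)) Δ) →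
      Provable cut (t.setSeq p (insert (MBForm.conj A B) Γ) Δ)
  /-- rule (∧R) -/
  | andR {cut : Bool} {t : NSeq Pm} {p Γ Δ ts A B} :
      SubAt t p (.node Γ Δ ts) →
      Provable cut (t.setSeq p Γ (insert A Δ)) →
      Provable cut (t.setSeq p Γ (insert B Δ)) →
      Provable cut (t.setSeq p Γ (insert (MBForm.conj A B) Δ))
  /-- rule (□L), with side condition `(α,d) ⪯ (β,d')` -/
  | boxL {cut : Bool} {t : NSeq Pm} {p Γ Δ ts i l u Γ' Δ' ts' A} {α : Pm.J} {d : Side} :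
      SubAt t p (.node Γ Δ ts) → NSeqs.get ts i = some (l, u) →
      SubAt t (p ++ [i]) (.node Γ' Δ' ts') →
      pleq (α : ℝ) d l.α l.d →
      Provable cut (t.setSeq (p ++ [i]) (insert A Γ') Δ') →
      Provable cut (t.setSeq p (insert (mkBox d α A) Γ) Δ)
  /-- rule (□L sym), with side condition `(α,d) ⪯ (β,d')` -/
  | boxLsym {cut : Bool} {t : NSeq Pm} {p Γ Δ ts i l u Γ' Δ' ts' A} {α : Pm.J} {d : Side} :
      SubAt t p (.node Γ Δ ts) → NSeqs.get ts i = some (l, u) →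
      SubAt t (p ++ [i]) (.node Γ' Δ' ts') →
      pleq (α : ℝ) d l.α l.d →
      Provable cut (t.setSeq p (insert A Γ) Δ) →
      Provable cut (t.setSeq (p ++ [i]) (insert (mkBox d α A) Γ') Δ')
  /-- rule (□L self), with side condition `(α,d) ≠ (1,o)` -/
  | boxLself {cut : Bool} {t : NSeq Pm} {p Γ Δ ts A} {α : Pm.J} {d : Side} :
      SubAt t p (.node Γ Δ ts) → ¬((α : ℝ) = 1 ∧ d = Side.o) →
      Provable cut (t.setSeq p (insert A Γ) Δ) →
      Provable cut (t.setSeq p (insert (mkBox d α A) Γ) Δ)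
  /-- rule (□^c_0): erase `A` from the left of one node and add `□^c_0 A`
  to the left of another arbitrary node -/
  | boxC0 {cut : Bool} {t : NSeq Pm} {p Γ Δ ts q Γ'' Δ'' ts'' A} :
      SubAt t p (.node Γ Δ ts) → SubAt t q (.node Γ'' Δ'' ts'') →
      Provable cut (t.setSeq p (insert A Γ) Δ) →
      Provable cut (t.setSeq q (insert (MBForm.boxc ⟨0, Pm.zero_mem⟩ A) Γ'') Δ'')
  /-- rule (□R) -/
  | boxR {cut : Bool} {t : NSeq Pm} {p Γ Δ ts A} {l : MBLab Pm} :
      SubAt t p (.node Γ Δ ts) →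
      Provable cut (t.addChild p l (.node ∅ {A} .nil)) →
      Provable cut (t.setSeq p Γ (insert (l.box A) Δ))
  /-- rule (□R self) -/
  | boxRself {cut : Bool} {t : NSeq Pm} {p Γ Δ ts A} :
      SubAt t p (.node Γ Δ ts) →
      Provable cut (t.setSeq p Γ (insert A Δ)) →
      Provable cut (t.setSeq p Γ (insert (MBForm.boxc ⟨1, Pm.one_mem⟩ A) Δ))


/-- The subformula relation. -/
inductive Subf {Pm : MBParams} : MBForm Pm → MBForm Pm → Prop
  | refl (A : MBForm Pm) : Subf A A
  | negS {A B : MBForm Pm} : Subf A B → Subf A (.neg B)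
  | conjL {A B C : MBForm Pm} : Subf A B → Subf A (.conj B C)
  | conjR {A B C : MBForm Pm} : Subf A C → Subf A (.conj B C)
  | boxcS {A B : MBForm Pm} {α : Pm.J} : Subf A B → Subf A (.boxc α B)
  | boxoS {A B : MBForm Pm} {α : Pm.J} : Subf A B → Subf A (.boxo α B)

/-- `A` occurs in (some sequent of) the nested-sequent `t`. -/
def OccursIn {Pm : MBParams} (A : MBForm Pm) (t : NSeq Pm) : Prop :=
  ∃ p Γ Δ ts, SubAt t p (.node Γ Δ ts) ∧ (A ∈ Γ ∨ A ∈ Δ)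

/-- One step of the saturation procedure used to build `Γ_C ⇒ Δ_C, T_C`.
The state is a nested-sequent together with the set of (address, formula)
occurrences of right-hand boxed formulas that have already been processed by
step (8). -/
inductive SatStep {Pm : MBParams} :
    NSeq Pm × Set (List ℕ × MBForm Pm) → NSeq Pm × Set (List ℕ × MBForm Pm) → Prop
  /-- step (1): `A ∧ B` on the left -/
  | andL {t D p Γ Δ ts A B} :
      SubAt t p (.node Γ Δ ts) → MBForm.conj A B ∈ Γ →
      SatStep (t, D) (t.setSeq p (insert A (insert B Γ)) Δ, D)
  /-- step (2): `A ∧ B` on the right; the disjunct keeping unprovability is adopted -/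
  | andR {t D p Γ Δ ts A B C} :
      SubAt t p (.node Γ Δ ts) → MBForm.conj A B ∈ Δ → (C = A ∨ C = B) →
      ¬ Provable true (t.setSeq p Γ (insert C Δ)) →
      SatStep (t, D) (t.setSeq p Γ (insert C Δ), D)
  /-- step (3): `¬A` on the left -/
  | negL {t D p Γ Δ ts A} :
      SubAt t p (.node Γ Δ ts) → MBForm.neg A ∈ Γ →
      SatStep (t, D) (t.setSeq p Γ (insert A Δ), D)
  /-- step (4): `¬A` on the right -/
  | negR {t D p Γ Δ ts A} :
      SubAt t p (.node Γ Δ ts) → MBForm.neg A ∈ Δ →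
      SatStep (t, D) (t.setSeq p (insert A Γ) Δ, D)
  /-- step (5): `□^d_α A` on the left of the parent of a bracket with `(α,d) ⪯ (β,d')` -/
  | boxL {t D p Γ Δ ts i l u Γ' Δ' ts' A} {α : Pm.J} {d : Side} :
      SubAt t p (.node Γ Δ ts) → NSeqs.get ts i = some (l, u) →
      SubAt t (p ++ [i]) (.node Γ' Δ' ts') →
      pleq (α : ℝ) d l.α l.d → mkBox d α A ∈ Γ →
      SatStep (t, D) (t.setSeq (p ++ [i]) (insert A Γ') Δ', D)
  /-- step (6): `□^d_α A` on the left of the child of a bracket with `(α,d) ⪯ (β,d')` -/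
  | boxLsym {t D p Γ Δ ts i l u Γ' Δ' ts' A} {α : Pm.J} {d : Side} :
      SubAt t p (.node Γ Δ ts) → NSeqs.get ts i = some (l, u) →
      SubAt t (p ++ [i]) (.node Γ' Δ' ts') →
      pleq (α : ℝ) d l.α l.d → mkBox d α A ∈ Γ' →
      SatStep (t, D) (t.setSeq p (insert A Γ) Δ, D)
  /-- step (7): `□^d_α A` on the left, `(α,d) ≠ (1,o)` -/
  | boxLself {t D p Γ Δ ts A} {α : Pm.J} {d : Side} :
      SubAt t p (.node Γ Δ ts) → ¬((α : ℝ) = 1 ∧ d = Side.o) → mkBox d α A ∈ Γ →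
      SatStep (t, D) (t.setSeq p (insert A Γ) Δ, D)
  /-- step (8): `□^d_α A` on the right (`α ≠ 1`), performed once per occurrence -/
  | boxR {t D p Γ Δ ts A} {α : Pm.J} {d : Side} (hne : (α : ℝ) ≠ 1) :
      SubAt t p (.node Γ Δ ts) → mkBox d α A ∈ Δ → (p, mkBox d α A) ∉ D →
      SatStep (t, D)
        (t.addChild p ⟨(α : ℝ), α.2, hne, d⟩ (.node ∅ {A} .nil),
         insert (p, mkBox d α A) D)
  /-- step (9): `□^c_1 A` on the right -/
  | boxRself {t D p Γ Δ ts A} :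
      SubAt t p (.node Γ Δ ts) → MBForm.boxc ⟨1, Pm.one_mem⟩ A ∈ Δ →
      SatStep (t, D) (t.setSeq p Γ (insert A Δ), D)
  /-- step (10): `□^c_0 A` on the left of some node: add `A` to the left of any node -/
  | boxC0 {t D p Γ Δ ts q Γ'' Δ'' ts'' A} :
      SubAt t p (.node Γ Δ ts) → MBForm.boxc ⟨0, Pm.zero_mem⟩ A ∈ Γ →
      SubAt t q (.node Γ'' Δ'' ts'') →
      SatStep (t, D) (t.setSeq q (insert A Γ'') Δ'', D)

/-- A state of the saturation procedure is saturated (terminal) when no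
saturation step changes it any more. -/
def Saturated {Pm : MBParams} (s : NSeq Pm × Set (List ℕ × MBForm Pm)) : Prop :=
  ∀ s', SatStep s s' → s' = s


mutual
/-- The subtree of `t` at address `p`, as a function. -/
def NSeq.sub? {Pm : MBParams} : NSeq Pm → List ℕ → Option (NSeq Pm)
  | t, [] => some t
  | .node _ _ ts, i :: p => NSeqs.subs? ts i p
def NSeqs.subs? {Pm : MBParams} : NSeqs Pm → ℕ → List ℕ → Option (NSeq Pm)
  | .nil, _, _ => none
  | .cons _ t _, 0, p => t.sub? p
  | .cons _ _ ts, n+1, p => NSeqs.subs? ts n p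
end

/-- The label of the edge from the node at address `p` to its `i`-th child. -/
def labelAt {Pm : MBParams} (t : NSeq Pm) (p : List ℕ) (i : ℕ) : Option (MBLab Pm) :=
  match t.sub? p with
  | some (.node _ _ ts) => (NSeqs.get ts i).map Prod.fst
  | none => none

/-- The set of elements of `J` appearing in a formula. -/
def MBForm.jsetF {Pm : MBParams} : MBForm Pm → Set ℝ
  | .var _ => ∅
  | .top => ∅
  | .bot => ∅
  | .neg A => A.jsetF
  | .conj A B => A.jsetF ∪ B.jsetF
  | .boxc α A => insert (α : ℝ) A.jsetF
  | .boxo α A => insert (α : ℝ) A.jsetF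

mutual
/-- The numbers appearing in a nested-sequent (in formulas or brackets). -/
def NSeq.jsetT {Pm : MBParams} : NSeq Pm → Set ℝ
  | .node Γ Δ ts =>
      (⋃ A ∈ Γ, MBForm.jsetF A) ∪ (⋃ A ∈ Δ, MBForm.jsetF A) ∪ NSeqs.jsetTs ts
def NSeqs.jsetTs {Pm : MBParams} : NSeqs Pm → Set ℝ
  | .nil => ∅
  | .cons l t ts => insert l.α (t.jsetT ∪ NSeqs.jsetTs ts)
end

/-- `(Γ ⇒ Δ, T)_J`: the numbers appearing in the nested-sequent, with `0` and `1`. -/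
def jset {Pm : MBParams} (t : NSeq Pm) : Set ℝ :=
  insert (0:ℝ) (insert (1:ℝ) t.jsetT)

/-- `U` is an interpolated set of `Js`. -/
def Interpolated (Js U : Set ℝ) : Prop :=
  U.Finite ∧ U ⊆ Set.Icc (0:ℝ) 1 ∧ Js ⊆ U ∧
    ∀ α ∈ Js, ∀ β ∈ Js, α < β → (∀ γ ∈ Js, ¬ (α < γ ∧ γ < β)) →
      ∃! δ, δ ∈ U ∧ α < δ ∧ δ < β

/-- `Suc U α`: the successor of `α` in the interpolated set `U` (with `Suc 1 = 1`). -/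
noncomputable def Suc (U : Set ℝ) (α : ℝ) : ℝ := sInf ((U ∩ Set.Ioi α) ∪ {1})

/-- Auxiliary value of the canonical relation in case `q` is the child of `p`
via a bracket (`β` for `[·]^c_β`, `Suc β` for `[·]^o_β`), and `0` otherwise. -/
noncomputable def lval {Pm : MBParams} (t : NSeq Pm) (U : Set ℝ) (p q : List ℕ) : ℝ :=
  match q.getLast? with
  | none => 0
  | some i =>
      if q.dropLast = p then
        match labelAt t p i with
        | some l => (match l.d with | Side.c => l.α | Side.o => Suc U l.α)
        | none => 0
      else 0

/-- The canonical relation `R_C` (on node addresses). -/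
noncomputable def RC {Pm : MBParams} (t : NSeq Pm) (U : Set ℝ) (p q : List ℕ) : ℝ :=
  if p = q then 1 else max (lval t U p q) (lval t U q p)

/-- The worlds of the canonical model: the nodes of the saturated nested-sequent. -/
def World {Pm : MBParams} (t : NSeq Pm) : Type := {p : List ℕ // IsNode t p}

/-- The canonical relation `R_C`, as a function on the worlds. -/
noncomputable def RCW {Pm : MBParams} (t : NSeq Pm) (U : Set ℝ) (p q : World t) : ℝ :=
  RC t U p.val q.val

/-- The canonical valuation `V_C` of the propositional variables. -/
def VC {Pm : MBParams} (t : NSeq Pm) (n : ℕ) : Set (World t) :=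
  {p | ∃ Γ Δ ts, SubAt t p.val (.node Γ Δ ts) ∧ MBForm.var n ∈ Γ}

/-- `P_C`: the family of all definable sets of worlds of the canonical model. -/
def PC {Pm : MBParams} (t : NSeq Pm) (U : Set ℝ) : Set (Set (World t)) :=
  {X | ∃ A : MBForm Pm, X = MBForm.valR (RCW t U) (VC t) A}


/-!
Induction on `A`. Saturation preserves unprovability, so no node of the saturation matches an
axiom, and a saturated node is closed under every saturation step; this settles the
propositional cases. A left-hand `□^d_α A` at `p` has been propagated to every world `q` with
`(α, d)`-access from `p`: besides `p` itself and the case `α = 0`, `q` is a neighbour of `p`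
across a bracket `(β, d')`, and since `U` puts a point strictly between `β` and the next number
of the saturation, `R_C` only grants `(α, d)`-access across it when `(α, d) ⪯ (β, d')`. A
right-hand `□^d_α A` with `α ≠ 1` is refuted at the child that step (8) created for it.
-/

section

variable {Pm : MBParams}

theorem NSeq.sub?_nil (t : NSeq Pm) : t.sub? [] = some t := by cases t; rfl

theorem NSeqs.subs?_eq : ∀ (ts : NSeqs Pm) (i : ℕ) (p : List ℕ),
    NSeqs.subs? ts i p = (ts.get i).bind fun x => x.2.sub? p
  | .nil, _, _ => rfl
  | .cons _ _ _, 0, _ => rfl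
  | .cons _ _ ts, i + 1, p => NSeqs.subs?_eq ts i p

theorem SubAt.sub?_eq {t u : NSeq Pm} {p : List ℕ} (h : SubAt t p u) : t.sub? p = some u := by
  induction h with
  | here t => exact t.sub?_nil
  | there hget _ ih => simp [NSeq.sub?, NSeqs.subs?_eq, hget, ih]

theorem subAt_of_sub?_eq : ∀ {p : List ℕ} {t u : NSeq Pm}, t.sub? p = some u → SubAt t p u
  | [], t, u, h => by
      rw [t.sub?_nil, Option.some_inj] at h
      exact h ▸ SubAt.here t
  | i :: p, .node Γ Δ ts, u, h => by
      simp only [NSeq.sub?, NSeqs.subs?_eq, Option.bind_eq_some_iff] at h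
      obtain ⟨x, hx, hu⟩ := h
      exact SubAt.there hx (subAt_of_sub?_eq hu)

theorem SubAt.unique {t u v : NSeq Pm} {p : List ℕ} (h₁ : SubAt t p u) (h₂ : SubAt t p v) :
    u = v :=
  Option.some_inj.mp (h₁.sub?_eq.symm.trans h₂.sub?_eq)

def NSeq.seqAt (t : NSeq Pm) (p : List ℕ) : Option (Finset (MBForm Pm) × Finset (MBForm Pm)) :=
  (t.sub? p).map fun | .node Γ Δ _ => (Γ, Δ)

theorem NSeq.sub?_cons (Γ Δ : Finset (MBForm Pm)) (ts : NSeqs Pm) (j : ℕ) (q : List ℕ) :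
    (NSeq.node Γ Δ ts).sub? (j :: q) = (ts.get j).bind fun x => x.2.sub? q :=
  NSeqs.subs?_eq ts j q

theorem NSeq.seqAt_nil (Γ Δ : Finset (MBForm Pm)) (ts : NSeqs Pm) :
    (NSeq.node Γ Δ ts).seqAt [] = some (Γ, Δ) := rfl

theorem NSeq.seqAt_cons (Γ Δ : Finset (MBForm Pm)) (ts : NSeqs Pm) (j : ℕ) (q : List ℕ) :
    (NSeq.node Γ Δ ts).seqAt (j :: q) = (ts.get j).bind fun x => x.2.seqAt q := by
  simp only [NSeq.seqAt, NSeq.sub?_cons, Option.map_bind]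
  rfl

theorem labelAt_nil (Γ Δ : Finset (MBForm Pm)) (ts : NSeqs Pm) (i : ℕ) :
    labelAt (.node Γ Δ ts) [] i = (ts.get i).map Prod.fst := rfl

theorem labelAt_cons (Γ Δ : Finset (MBForm Pm)) (ts : NSeqs Pm) (j : ℕ) (q : List ℕ) (i : ℕ) :
    labelAt (.node Γ Δ ts) (j :: q) i = (ts.get j).bind fun x => labelAt x.2 q i := by
  unfold labelAt
  rw [NSeq.sub?_cons]
  cases ts.get j with
  | none => rfl
  | some x => simp only [Option.bind_some]

theorem SubAt.seqAt_eq {t : NSeq Pm} {p Γ Δ ts} (h : SubAt t p (.node Γ Δ ts)) :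
    t.seqAt p = some (Γ, Δ) := by
  simp [NSeq.seqAt, h.sub?_eq]

theorem exists_subAt_of_seqAt_eq {t : NSeq Pm} {p Γ Δ} (h : t.seqAt p = some (Γ, Δ)) :
    ∃ ts, SubAt t p (.node Γ Δ ts) := by
  obtain ⟨⟨Γ', Δ', ts⟩, hu, he⟩ := Option.map_eq_some_iff.mp h
  cases he
  exact ⟨ts, subAt_of_sub?_eq hu⟩

theorem SubAt.exists_get_of_labelAt {t : NSeq Pm} {p i l Γ Δ ts}
    (hsub : SubAt t p (.node Γ Δ ts)) (hl : labelAt t p i = some l) :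
    ∃ u, ts.get i = some (l, u) := by
  unfold labelAt at hl
  rw [hsub.sub?_eq] at hl
  obtain ⟨⟨l', u⟩, hu, rfl⟩ := Option.map_eq_some_iff.mp hl
  exact ⟨u, hu⟩

theorem NSeqs.get_setSeqs : ∀ (ts : NSeqs Pm) (i j : ℕ) (p : List ℕ) (Γ Δ : Finset (MBForm Pm)),
    (ts.setSeqs i p Γ Δ).get j =
      if j = i then (ts.get i).map (fun x => (x.1, x.2.setSeq p Γ Δ)) else ts.get j
  | .nil, _, _, _, _, _ => by simp [NSeqs.setSeqs, NSeqs.get]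
  | .cons _ _ _, 0, 0, _, _, _ => rfl
  | .cons _ _ _, 0, _ + 1, _, _, _ => rfl
  | .cons _ _ _, _ + 1, 0, _, _, _ => rfl
  | .cons _ _ ts, i + 1, j + 1, p, Γ, Δ => by
      simp [NSeqs.setSeqs, NSeqs.get, NSeqs.get_setSeqs ts i j p Γ Δ]

theorem NSeq.seqAt_setSeq : ∀ (t : NSeq Pm) (p q : List ℕ) (Γ' Δ' : Finset (MBForm Pm)),
    (t.setSeq p Γ' Δ').seqAt q = if q = p then (t.seqAt p).map fun _ => (Γ', Δ') else t.seqAt q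
  | .node _ _ _, [], [], _, _ => rfl
  | .node _ _ _, [], _ :: _, _, _ => by simp [NSeq.setSeq, NSeq.seqAt_cons]
  | .node _ _ _, _ :: _, [], _, _ => by simp [NSeq.setSeq, NSeq.seqAt_nil]
  | .node Γ Δ ts, i :: p, j :: q, Γ', Δ' => by
      simp only [NSeq.setSeq, NSeq.seqAt_cons, NSeqs.get_setSeqs, List.cons.injEq]
      by_cases hj : j = i
      · subst hj
        cases ts.get j with
        | none => simp
        | some x => simp [NSeq.seqAt_setSeq x.2 p q Γ' Δ']
      · simp [hj]

theorem labelAt_setSeq : ∀ (t : NSeq Pm) (p q : List ℕ) (i : ℕ) (Γ' Δ' : Finset (MBForm Pm)),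
    labelAt (t.setSeq p Γ' Δ') q i = labelAt t q i
  | .node _ _ _, [], [], _, _, _ => rfl
  | .node _ _ _, [], _ :: _, _, _, _ => by simp only [NSeq.setSeq, labelAt_cons]
  | .node Γ Δ ts, _ :: _, [], i, _, _ => by
      simp only [NSeq.setSeq, labelAt_nil, NSeqs.get_setSeqs]
      split_ifs with h
      · subst h; cases ts.get i <;> rfl
      · rfl
  | .node Γ Δ ts, k :: p, j :: q, i, Γ', Δ' => by
      simp only [NSeq.setSeq, labelAt_cons, NSeqs.get_setSeqs]
      split_ifs with h
      · subst h
        cases ts.get j with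
        | none => rfl
        | some x => exact labelAt_setSeq x.2 p q i Γ' Δ'
      · rfl

theorem NSeqs.setSeqs_eq_self : ∀ {ts : NSeqs Pm} {i : ℕ} {l : MBLab Pm} {u : NSeq Pm}
    {p : List ℕ} {Γ Δ : Finset (MBForm Pm)},
    ts.get i = some (l, u) → u.setSeq p Γ Δ = u → ts.setSeqs i p Γ Δ = ts
  | .nil, _, _, _, _, _, _, h, _ => by cases h
  | .cons _ _ _, 0, _, _, _, _, _, h, hu => by
      cases h
      simp only [NSeqs.setSeqs, hu]
  | .cons _ _ ts, i + 1, _, _, _, _, _, h, hu => by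
      simp only [NSeqs.setSeqs, NSeqs.setSeqs_eq_self (ts := ts) (i := i) h hu]

theorem SubAt.setSeq_eq_self {t u : NSeq Pm} {p : List ℕ} (h : SubAt t p u) :
    ∀ {Γ Δ ts}, u = .node Γ Δ ts → t.setSeq p Γ Δ = t := by
  induction h with
  | here t => rintro Γ Δ ts rfl; rfl
  | there hget _ ih =>
      intro Γ Δ ts hu
      simp only [NSeq.setSeq, NSeqs.setSeqs_eq_self hget (ih hu)]

theorem SubAt.eq_of_setSeq_eq_self {t : NSeq Pm} {p Γ Δ ts Γ' Δ'}
    (h : SubAt t p (.node Γ Δ ts)) (he : t.setSeq p Γ' Δ' = t) : Γ' = Γ ∧ Δ' = Δ := by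
  have key := t.seqAt_setSeq p p Γ' Δ'
  rw [he, h.seqAt_eq, if_pos rfl] at key
  simpa [eq_comm] using key

def NSeqs.length : NSeqs Pm → ℕ
  | .nil => 0
  | .cons _ _ ts => ts.length + 1

theorem NSeqs.get_snoc : ∀ (ts : NSeqs Pm) (l : MBLab Pm) (u : NSeq Pm) (j : ℕ),
    (ts.snoc l u).get j = if j = ts.length then some (l, u) else ts.get j
  | .nil, _, _, 0 => rfl
  | .nil, _, _, _ + 1 => rfl
  | .cons _ _ _, _, _, 0 => by simp [NSeqs.snoc, NSeqs.get, NSeqs.length]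
  | .cons _ _ ts, l, u, j + 1 => by
      simp [NSeqs.snoc, NSeqs.get, NSeqs.length, NSeqs.get_snoc ts l u j]

theorem NSeqs.get_length : ∀ ts : NSeqs Pm, ts.get ts.length = none
  | .nil => rfl
  | .cons _ _ ts => ts.get_length

theorem NSeqs.get_snoc_of_eq_some {ts : NSeqs Pm} {j : ℕ} {x : MBLab Pm × NSeq Pm}
    (l : MBLab Pm) (u : NSeq Pm) (h : ts.get j = some x) : (ts.snoc l u).get j = some x := by
  have hj : j ≠ ts.length := by
    rintro rfl
    simp [NSeqs.get_length] at h
  rw [NSeqs.get_snoc, if_neg hj, h]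

theorem NSeqs.get_addChilds : ∀ (ts : NSeqs Pm) (i j : ℕ) (p : List ℕ) (l : MBLab Pm)
    (u : NSeq Pm), (ts.addChilds i p l u).get j =
      if j = i then (ts.get i).map (fun x => (x.1, x.2.addChild p l u)) else ts.get j
  | .nil, _, _, _, _, _ => by simp [NSeqs.addChilds, NSeqs.get]
  | .cons _ _ _, 0, 0, _, _, _ => rfl
  | .cons _ _ _, 0, _ + 1, _, _, _ => rfl
  | .cons _ _ _, _ + 1, 0, _, _, _ => rfl
  | .cons _ _ ts, i + 1, j + 1, p, l, u => by
      simp [NSeqs.addChilds, NSeqs.get, NSeqs.get_addChilds ts i j p l u]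

theorem NSeq.seqAt_addChild_of_eq_some : ∀ (t : NSeq Pm) (p : List ℕ) (l : MBLab Pm)
    (u : NSeq Pm) {q : List ℕ} {x : Finset (MBForm Pm) × Finset (MBForm Pm)},
    t.seqAt q = some x → (t.addChild p l u).seqAt q = some x
  | .node _ _ _, [], _, _, [], _, h => h
  | .node _ _ _, _ :: _, _, _, [], _, h => h
  | .node _ _ ts, [], l, u, j :: q, x, h => by
      rw [NSeq.seqAt_cons, Option.bind_eq_some_iff] at h
      obtain ⟨y, hy, hq⟩ := h
      simp only [NSeq.addChild, NSeq.seqAt_cons, ts.get_snoc_of_eq_some l u hy]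
      exact hq
  | .node _ _ ts, i :: p, l, u, j :: q, x, h => by
      rw [NSeq.seqAt_cons, Option.bind_eq_some_iff] at h
      obtain ⟨y, hy, hq⟩ := h
      simp only [NSeq.addChild, NSeq.seqAt_cons, NSeqs.get_addChilds]
      split_ifs with hj
      · subst hj
        simp only [hy, Option.map_some, Option.bind_some]
        exact y.2.seqAt_addChild_of_eq_some p l u hq
      · simp only [hy, Option.bind_some]
        exact hq

theorem labelAt_addChild_of_eq_some : ∀ (t : NSeq Pm) (p : List ℕ) (l : MBLab Pm)
    (u : NSeq Pm) {q : List ℕ} {i : ℕ} {l' : MBLab Pm},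
    labelAt t q i = some l' → labelAt (t.addChild p l u) q i = some l'
  | .node _ _ ts, [], l, u, [], i, l', h => by
      rw [labelAt_nil, Option.map_eq_some_iff] at h
      obtain ⟨y, hy, rfl⟩ := h
      simp [NSeq.addChild, labelAt_nil, ts.get_snoc_of_eq_some l u hy]
  | .node _ _ ts, [], l, u, j :: q, i, l', h => by
      rw [labelAt_cons, Option.bind_eq_some_iff] at h
      obtain ⟨y, hy, hq⟩ := h
      simp only [NSeq.addChild, labelAt_cons, ts.get_snoc_of_eq_some l u hy]
      exact hq
  | .node _ _ ts, k :: p, l, u, [], i, l', h => by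
      rw [labelAt_nil, Option.map_eq_some_iff] at h
      obtain ⟨y, hy, rfl⟩ := h
      simp only [NSeq.addChild, labelAt_nil, NSeqs.get_addChilds]
      split_ifs with hi
      · subst hi; simp [hy]
      · simp [hy]
  | .node _ _ ts, k :: p, l, u, j :: q, i, l', h => by
      rw [labelAt_cons, Option.bind_eq_some_iff] at h
      obtain ⟨y, hy, hq⟩ := h
      simp only [NSeq.addChild, labelAt_cons, NSeqs.get_addChilds]
      split_ifs with hj
      · subst hj
        simp only [hy, Option.map_some, Option.bind_some]
        exact labelAt_addChild_of_eq_some y.2 p l u hq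
      · simp only [hy, Option.bind_some]
        exact hq

theorem SubAt.addChild_new {t v : NSeq Pm} {p : List ℕ} (h : SubAt t p v) :
    ∀ {Γ Δ ts}, v = .node Γ Δ ts → ∀ (l : MBLab Pm) (u : NSeq Pm),
      labelAt (t.addChild p l u) p ts.length = some l ∧
        (t.addChild p l u).seqAt (p ++ [ts.length]) = u.seqAt [] := by
  induction h with
  | here =>
      rintro Γ Δ ts rfl l u
      simp [NSeq.addChild, labelAt_nil, NSeq.seqAt_cons, NSeqs.get_snoc]
  | there hget _ ih =>
      intro Γ Δ ts hv l u
      simp [NSeq.addChild, labelAt_cons, NSeq.seqAt_cons, NSeqs.get_addChilds, hget, ih hv l u]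

theorem NSeqs.jsetTs_of_get : ∀ {ts : NSeqs Pm} {i : ℕ} {l : MBLab Pm} {u : NSeq Pm},
    ts.get i = some (l, u) → l.α ∈ ts.jsetTs ∧ u.jsetT ⊆ ts.jsetTs
  | .nil, _, _, _, h => by cases h
  | .cons _ _ _, 0, _, _, h => by
      cases h
      exact ⟨Set.mem_insert _ _, fun _ hx => Set.mem_insert_of_mem _ (Or.inl hx)⟩
  | .cons _ _ ts, i + 1, _, _, h => by
      obtain ⟨hl, hu⟩ := NSeqs.jsetTs_of_get (ts := ts) (i := i) h
      exact ⟨Set.mem_insert_of_mem _ (Or.inr hl),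
        fun _ hx => Set.mem_insert_of_mem _ (Or.inr (hu hx))⟩

theorem SubAt.jsetT_subset {t u : NSeq Pm} {p : List ℕ} (h : SubAt t p u) : u.jsetT ⊆ t.jsetT := by
  induction h with
  | here => rfl
  | there hget _ ih => exact ih.trans ((NSeqs.jsetTs_of_get hget).2.trans Set.subset_union_right)

theorem SubAt.label_mem_jset {t : NSeq Pm} {p Γ Δ ts i l u} (h : SubAt t p (.node Γ Δ ts))
    (hget : ts.get i = some (l, u)) : l.α ∈ jset t :=
  Set.mem_insert_of_mem _ <| Set.mem_insert_of_mem _ <|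
    h.jsetT_subset (Set.mem_union_right _ (NSeqs.jsetTs_of_get hget).1)

theorem SubAt.boxIndex_mem_jset {t : NSeq Pm} {p Γ Δ ts} {d : Side} {α : Pm.J} {A : MBForm Pm}
    (h : SubAt t p (.node Γ Δ ts)) (hA : mkBox d α A ∈ Γ) : (α : ℝ) ∈ jset t := by
  refine Set.mem_insert_of_mem _ <| Set.mem_insert_of_mem _ <|
    h.jsetT_subset (Or.inl (Or.inl (Set.mem_biUnion hA ?_)))
  cases d <;> exact Set.mem_insert _ _

def Side.rel : Side → ℝ → ℝ → Prop
  | .c, α, r => α ≤ r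
  | .o, α, r => α < r

theorem MBForm.valR_mkBox {S : Type} (R : S → S → ℝ) (V : ℕ → Set S) (d : Side) (α : Pm.J)
    (A : MBForm Pm) :
    (mkBox d α A).valR R V = {s | ∀ t, d.rel α (R s t) → t ∈ A.valR R V} := by
  cases d <;> rfl

theorem Side.rel_zero {d : Side} {α : ℝ} (hα : 0 ≤ α) (h : d.rel α 0) : d = .c ∧ α = 0 := by
  cases d
  · exact ⟨rfl, le_antisymm h hα⟩
  · exact absurd h hα.not_gt

section Suc

variable {U : Set ℝ}

theorem Suc_mem (hU : U.Finite) (β : ℝ) : Suc U β ∈ (U ∩ Set.Ioi β) ∪ {1} :=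
  Set.Nonempty.csInf_mem ⟨1, Or.inr rfl⟩ ((hU.inter_of_left _).union (Set.finite_singleton 1))

theorem lt_Suc (hU : U.Finite) {β : ℝ} (hβ : β < 1) : β < Suc U β := by
  rcases Suc_mem hU β with h | h
  · exact h.2
  · rwa [Set.mem_singleton_iff.mp h]

theorem Suc_le (hU : U.Finite) {x β : ℝ} (hx : x ∈ U) (hβx : β < x) : Suc U β ≤ x :=
  csInf_le ((hU.inter_of_left _).union (Set.finite_singleton 1)).bddBelow (Or.inl ⟨hx, hβx⟩)

/-- `U` has a point strictly between `β` and the next element of `Js`, and `Suc U β` lies below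
it. -/
theorem Interpolated.le_of_le_Suc {Js : Set ℝ} (hU : Interpolated Js U) {α β : ℝ}
    (hα : α ∈ Js) (hβ : β ∈ Js) (h : α ≤ Suc U β) : α ≤ β := by
  obtain ⟨hUf, -, hJU, hint⟩ := hU
  by_contra! hβα
  have hT : (Js ∩ Set.Ioi β).Finite := (hUf.subset hJU).inter_of_left _
  obtain ⟨γ, ⟨hγJ, hβγ⟩, hγmin⟩ := Set.exists_min_image _ id hT ⟨α, hα, hβα⟩
  obtain ⟨δ, ⟨hδU, hβδ, hδγ⟩, -⟩ := hint β hβ γ hγJ hβγ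
    fun c hc hbetween => hbetween.2.not_ge (hγmin c ⟨hc, hbetween.1⟩)
  have hγα : γ ≤ α := hγmin α ⟨hα, hβα⟩
  linarith [Suc_le hUf hδU hβδ]

end Suc

noncomputable def MBLab.rcValue (U : Set ℝ) (l : MBLab Pm) : ℝ :=
  match l.d with
  | .c => l.α
  | .o => Suc U l.α

namespace MBLab

variable {U : Set ℝ} (l : MBLab Pm)

theorem α_lt_one : l.α < 1 := lt_of_le_of_ne (Pm.subI l.memJ).2 l.ne_one

theorem rel_rcValue (hU : U.Finite) : l.d.rel l.α (l.rcValue U) := by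
  unfold rcValue
  cases l.d
  · exact le_refl l.α
  · exact lt_Suc hU l.α_lt_one

theorem rcValue_nonneg (hU : U.Finite) : 0 ≤ l.rcValue U := by
  have hα : 0 ≤ l.α := (Pm.subI l.memJ).1
  unfold rcValue
  cases l.d
  · exact hα
  · exact hα.trans (lt_Suc hU l.α_lt_one).le

theorem pleq_of_rel_rcValue {Js : Set ℝ} (hU : Interpolated Js U) {d : Side} {α : ℝ}
    (hα : α ∈ Js) (hl : l.α ∈ Js) (h : d.rel α (l.rcValue U)) : pleq α d l.α l.d := by
  unfold rcValue at h
  cases hd : l.d <;> rw [hd] at h <;> cases d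
  · exact h
  · exact h
  · exact hU.le_of_le_Suc hα hl h
  · exact hU.le_of_le_Suc hα hl h.le

end MBLab

section CanonicalRelation

variable (t : NSeq Pm) (U : Set ℝ)

theorem lval_eq_zero_or (p q : List ℕ) :
    lval t U p q = 0 ∨ ∃ i l, q = p ++ [i] ∧ labelAt t p i = some l := by
  rcases q.eq_nil_or_concat' with rfl | ⟨q, i, rfl⟩
  · exact Or.inl rfl
  by_cases hq : q = p
  · subst hq
    cases hl : labelAt t q i with
    | none => left; simp [lval, hl]
    | some l => exact Or.inr ⟨i, l, rfl, hl⟩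
  · left; simp [lval, hq]

theorem lval_append_singleton {p : List ℕ} {i : ℕ} {l : MBLab Pm}
    (h : labelAt t p i = some l) : lval t U p (p ++ [i]) = l.rcValue U := by
  unfold lval
  simp [h, MBLab.rcValue]

theorem lval_append_singleton_left (p : List ℕ) (i : ℕ) : lval t U (p ++ [i]) p = 0 := by
  rcases p.eq_nil_or_concat' with rfl | ⟨p, j, rfl⟩
  · rfl
  simp [lval]

theorem RC_self (p : List ℕ) : RC t U p p = 1 := if_pos rfl

theorem RC_comm (p q : List ℕ) : RC t U p q = RC t U q p := by
  unfold RC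
  by_cases h : p = q
  · simp [h]
  · rw [if_neg h, if_neg (Ne.symm h), max_comm]

variable {t U}

theorem RC_append_singleton (hU : U.Finite) {p : List ℕ} {i : ℕ} {l : MBLab Pm}
    (h : labelAt t p i = some l) : RC t U p (p ++ [i]) = l.rcValue U := by
  rw [RC, if_neg (by simp), lval_append_singleton t U h, lval_append_singleton_left]
  exact max_eq_left (l.rcValue_nonneg hU)

theorem RC_cases (hU : U.Finite) (p q : List ℕ) :
    p = q ∨
    (∃ i l, q = p ++ [i] ∧ labelAt t p i = some l ∧ RC t U p q = l.rcValue U) ∨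
    (∃ i l, p = q ++ [i] ∧ labelAt t q i = some l ∧ RC t U p q = l.rcValue U) ∨
    RC t U p q = 0 := by
  by_cases hpq : p = q
  · exact Or.inl hpq
  rcases lval_eq_zero_or t U p q with hpq' | ⟨i, l, rfl, hl⟩
  · rcases lval_eq_zero_or t U q p with hqp | ⟨i, l, rfl, hl⟩
    · exact Or.inr (Or.inr (Or.inr (by rw [RC, if_neg hpq, hpq', hqp, max_self])))
    · exact Or.inr (Or.inr (Or.inl ⟨i, l, rfl, hl, by rw [RC_comm, RC_append_singleton hU hl]⟩))
  · exact Or.inr (Or.inl ⟨i, l, rfl, hl, RC_append_singleton hU hl⟩)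

end CanonicalRelation

theorem mkBox_injective {d d' : Side} {α α' : Pm.J} {A A' : MBForm Pm}
    (h : mkBox d α A = mkBox d' α' A') : d = d' ∧ α = α' ∧ A = A' := by
  cases d <;> cases d' <;> simp_all [mkBox]

theorem MBLab.box_mk (α : Pm.J) (hne : (α : ℝ) ≠ 1) (d : Side) (A : MBForm Pm) :
    (MBLab.mk (α : ℝ) α.2 hne d).box A = mkBox d α A := by
  cases d <;> rfl

section Saturation

variable {t : NSeq Pm} {p : List ℕ} {Γ Δ : Finset (MBForm Pm)} {ts : NSeqs Pm}

theorem SubAt.setSeq_insert_left (h : SubAt t p (.node Γ Δ ts)) {A : MBForm Pm} (hA : A ∈ Γ) :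
    t.setSeq p (insert A Γ) Δ = t := by
  rw [Finset.insert_eq_self.mpr hA, h.setSeq_eq_self rfl]

theorem SubAt.setSeq_insert_right (h : SubAt t p (.node Γ Δ ts)) {A : MBForm Pm} (hA : A ∈ Δ) :
    t.setSeq p Γ (insert A Δ) = t := by
  rw [Finset.insert_eq_self.mpr hA, h.setSeq_eq_self rfl]

/-- Each saturation step is the conclusion-to-premise reading of an **NSMB** rule (or keeps a
premise of (∧R) that is unprovable), so it preserves unprovability. -/
theorem SatStep.not_provable {a b : NSeq Pm × Set (List ℕ × MBForm Pm)} (h : SatStep a b)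
    (hnp : ¬ Provable true a.1) : ¬ Provable true b.1 := by
  intro hp
  apply hnp
  cases h with
  | andL hsub hmem => simpa only [hsub.setSeq_insert_left hmem] using Provable.andL hsub hp
  | andR _ _ _ hnp' => exact absurd hp hnp'
  | negL hsub hmem => simpa only [hsub.setSeq_insert_left hmem] using Provable.negL hsub hp
  | negR hsub hmem => simpa only [hsub.setSeq_insert_right hmem] using Provable.negR hsub hp
  | boxL hsub hget hsub' hpleq hmem =>
      simpa only [hsub.setSeq_insert_left hmem] using Provable.boxL hsub hget hsub' hpleq hp
  | boxLsym hsub hget hsub' hpleq hmem =>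
      simpa only [hsub'.setSeq_insert_left hmem] using Provable.boxLsym hsub hget hsub' hpleq hp
  | boxLself hsub hcond hmem =>
      simpa only [hsub.setSeq_insert_left hmem] using Provable.boxLself hsub hcond hp
  | boxR hne hsub hmem =>
      simpa only [MBLab.box_mk, hsub.setSeq_insert_right hmem] using Provable.boxR hsub hp
  | boxRself hsub hmem =>
      simpa only [hsub.setSeq_insert_right hmem] using Provable.boxRself hsub hp
  | boxC0 hsub hmem hsub' =>
      simpa only [hsub.setSeq_insert_left hmem] using Provable.boxC0 hsub' hsub hp

theorem not_provable_of_reflTransGen {a b : NSeq Pm × Set (List ℕ × MBForm Pm)}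
    (h : Relation.ReflTransGen SatStep a b) (hnp : ¬ Provable true a.1) :
    ¬ Provable true b.1 := by
  induction h with
  | refl => exact hnp
  | tail _ hstep ih => exact hstep.not_provable ih

variable {D : Set (List ℕ × MBForm Pm)}

theorem Saturated.setSeq_eq (hsat : Saturated (t, D)) (hsub : SubAt t p (.node Γ Δ ts))
    {Γ₁ Δ₁} (hstep : SatStep (t, D) (t.setSeq p Γ₁ Δ₁, D)) : Γ₁ = Γ ∧ Δ₁ = Δ :=
  hsub.eq_of_setSeq_eq_self (congrArg Prod.fst (hsat _ hstep))

theorem Saturated.mem_left (hsat : Saturated (t, D)) (hsub : SubAt t p (.node Γ Δ ts))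
    {A : MBForm Pm} (hstep : SatStep (t, D) (t.setSeq p (insert A Γ) Δ, D)) : A ∈ Γ :=
  Finset.insert_eq_self.mp (hsat.setSeq_eq hsub hstep).1

theorem Saturated.mem_right (hsat : Saturated (t, D)) (hsub : SubAt t p (.node Γ Δ ts))
    {A : MBForm Pm} (hstep : SatStep (t, D) (t.setSeq p Γ (insert A Δ), D)) : A ∈ Δ :=
  Finset.insert_eq_self.mp (hsat.setSeq_eq hsub hstep).2

end Saturation

section BoxWitnesses

variable {a b : NSeq Pm × Set (List ℕ × MBForm Pm)}

theorem NSeq.seqAt_setSeq_mono {t : NSeq Pm} {p : List ℕ} {Γ₀ Δ₀ Γ₁ Δ₁ : Finset (MBForm Pm)}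
    {ts : NSeqs Pm} (hsub : SubAt t p (.node Γ₀ Δ₀ ts)) (hΓ : Γ₀ ⊆ Γ₁) (hΔ : Δ₀ ⊆ Δ₁)
    {q Γ Δ} (hq : t.seqAt q = some (Γ, Δ)) :
    ∃ Γ' Δ', (t.setSeq p Γ₁ Δ₁).seqAt q = some (Γ', Δ') ∧ Γ ⊆ Γ' ∧ Δ ⊆ Δ' := by
  rw [NSeq.seqAt_setSeq]
  split_ifs with h
  · subst h
    rw [hsub.seqAt_eq, Option.some_inj, Prod.mk.injEq] at hq
    obtain ⟨rfl, rfl⟩ := hq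
    exact ⟨Γ₁, Δ₁, by rw [hsub.seqAt_eq]; rfl, hΓ, hΔ⟩
  · exact ⟨Γ, Δ, hq, subset_rfl, subset_rfl⟩

theorem SatStep.seqAt_mono (h : SatStep a b) {q Γ Δ} (hq : a.1.seqAt q = some (Γ, Δ)) :
    ∃ Γ' Δ', b.1.seqAt q = some (Γ', Δ') ∧ Γ ⊆ Γ' ∧ Δ ⊆ Δ' := by
  cases h with
  | andL hsub =>
      exact NSeq.seqAt_setSeq_mono hsub
        ((Finset.subset_insert _ _).trans (Finset.subset_insert _ _)) subset_rfl hq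
  | andR hsub => exact NSeq.seqAt_setSeq_mono hsub subset_rfl (Finset.subset_insert _ _) hq
  | negL hsub => exact NSeq.seqAt_setSeq_mono hsub subset_rfl (Finset.subset_insert _ _) hq
  | negR hsub => exact NSeq.seqAt_setSeq_mono hsub (Finset.subset_insert _ _) subset_rfl hq
  | boxL _ _ hsub' => exact NSeq.seqAt_setSeq_mono hsub' (Finset.subset_insert _ _) subset_rfl hq
  | boxLsym hsub => exact NSeq.seqAt_setSeq_mono hsub (Finset.subset_insert _ _) subset_rfl hq
  | boxLself hsub => exact NSeq.seqAt_setSeq_mono hsub (Finset.subset_insert _ _) subset_rfl hq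
  | boxR => exact ⟨Γ, Δ, NSeq.seqAt_addChild_of_eq_some _ _ _ _ hq, subset_rfl, subset_rfl⟩
  | boxRself hsub => exact NSeq.seqAt_setSeq_mono hsub subset_rfl (Finset.subset_insert _ _) hq
  | boxC0 _ _ hsub' => exact NSeq.seqAt_setSeq_mono hsub' (Finset.subset_insert _ _) subset_rfl hq

theorem SatStep.labelAt_eq (h : SatStep a b) {q i l} (hl : labelAt a.1 q i = some l) :
    labelAt b.1 q i = some l := by
  cases h <;> first
    | exact labelAt_addChild_of_eq_some _ _ _ _ hl
    | rwa [labelAt_setSeq]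

def HasBoxWitnesses (s : NSeq Pm × Set (List ℕ × MBForm Pm)) : Prop :=
  ∀ p d (α : Pm.J) (A : MBForm Pm), (p, mkBox d α A) ∈ s.2 →
    ∃ m l Γ Δ, labelAt s.1 p m = some l ∧ l.α = α ∧ l.d = d ∧
      s.1.seqAt (p ++ [m]) = some (Γ, Δ) ∧ A ∈ Δ

theorem SatStep.hasBoxWitnesses (hstep : SatStep a b) (ha : HasBoxWitnesses a) :
    HasBoxWitnesses b := by
  have persist : ∀ p d (α : Pm.J) (A : MBForm Pm), (p, mkBox d α A) ∈ a.2 →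
      ∃ m l Γ Δ, labelAt b.1 p m = some l ∧ l.α = α ∧ l.d = d ∧
        b.1.seqAt (p ++ [m]) = some (Γ, Δ) ∧ A ∈ Δ := by
    intro p d α A hmem
    obtain ⟨m, l, Γ, Δ, hl, hα, hd, hseq, hA⟩ := ha p d α A hmem
    obtain ⟨Γ', Δ', hseq', -, hΔ⟩ := hstep.seqAt_mono hseq
    exact ⟨m, l, Γ', Δ', hstep.labelAt_eq hl, hα, hd, hseq', hΔ hA⟩
  intro p d α A hmem
  cases hstep with
  | @boxR _ _ _ _ _ ts₀ _ _ _ hne hsub =>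
      rcases Set.mem_insert_iff.mp hmem with heq | hold
      · obtain ⟨rfl, hbox⟩ := Prod.mk.inj heq
        obtain ⟨rfl, rfl, rfl⟩ := mkBox_injective hbox
        obtain ⟨hl, hseq⟩ := hsub.addChild_new rfl ⟨α, α.2, hne, d⟩ (.node ∅ {A} .nil)
        exact ⟨ts₀.length, _, ∅, {A}, hl, rfl, rfl, hseq, Finset.mem_singleton_self A⟩
      · exact persist p d α A hold
  | _ => exact persist p d α A hmem

theorem HasBoxWitnesses.of_reflTransGen (h : Relation.ReflTransGen SatStep a b)
    (ha : HasBoxWitnesses a) : HasBoxWitnesses b := by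
  induction h with
  | refl => exact ha
  | tail _ hstep ih => exact hstep.hasBoxWitnesses ih

end BoxWitnesses

def Truthful (t : NSeq Pm) (U : Set ℝ) (A : MBForm Pm) : Prop :=
  ∀ (q : World t) Γ Δ ts, SubAt t q.val (.node Γ Δ ts) →
    (A ∈ Γ → q ∈ A.valR (RCW t U) (VC t)) ∧ (A ∈ Δ → q ∉ A.valR (RCW t U) (VC t))

section TruthLemma

variable {t : NSeq Pm} {D : Set (List ℕ × MBForm Pm)} {U : Set ℝ}

theorem truthful_var (hnp : ¬ Provable true t) (n : ℕ) : Truthful t U (.var n) := by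
  refine fun q Γ Δ ts hsub => ⟨fun hΓ => ⟨Γ, Δ, ts, hsub, hΓ⟩, ?_⟩
  rintro hΔ ⟨Γ', Δ', ts', hsub', hΓ'⟩
  cases hsub.unique hsub'
  exact hnp (Provable.axId hsub hΓ' hΔ)

theorem truthful_top (hnp : ¬ Provable true t) : Truthful t U .top :=
  fun q _ _ _ hsub => ⟨fun _ => Set.mem_univ q, fun hΔ _ => hnp (Provable.axTop hsub hΔ)⟩

theorem truthful_bot (hnp : ¬ Provable true t) : Truthful t U .bot :=
  fun _ _ _ _ hsub => ⟨fun hΓ => absurd (Provable.axBot hsub hΓ) hnp, fun _ => id⟩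

theorem truthful_neg (hsat : Saturated (t, D)) {A : MBForm Pm} (hA : Truthful t U A) :
    Truthful t U A.neg := fun q Γ Δ ts hsub =>
  ⟨fun hΓ => (hA q Γ Δ ts hsub).2 (hsat.mem_right hsub (SatStep.negL hsub hΓ)),
   fun hΔ hq => hq ((hA q Γ Δ ts hsub).1 (hsat.mem_left hsub (SatStep.negR hsub hΔ)))⟩

theorem truthful_conj (hnp : ¬ Provable true t) (hsat : Saturated (t, D)) {A B : MBForm Pm}
    (hA : Truthful t U A) (hB : Truthful t U B) : Truthful t U (A.conj B) := by
  intro q Γ Δ ts hsub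
  constructor
  · intro hΓ
    have hAB := (hsat.setSeq_eq hsub (SatStep.andL hsub hΓ)).1.subset
    rw [Finset.insert_subset_iff, Finset.insert_subset_iff] at hAB
    exact ⟨(hA q Γ Δ ts hsub).1 hAB.1, (hB q Γ Δ ts hsub).1 hAB.2.1⟩
  · rintro hΔ ⟨hqA, hqB⟩
    by_cases hPA : Provable true (t.setSeq q.val Γ (insert A Δ))
    · have hPB : ¬ Provable true (t.setSeq q.val Γ (insert B Δ)) := fun hPB =>
        hnp (by simpa only [hsub.setSeq_insert_right hΔ] using Provable.andR hsub hPA hPB)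
      exact (hB q Γ Δ ts hsub).2
        (hsat.mem_right hsub (SatStep.andR hsub hΔ (Or.inr rfl) hPB)) hqB
    · exact (hA q Γ Δ ts hsub).2
        (hsat.mem_right hsub (SatStep.andR hsub hΔ (Or.inl rfl) hPA)) hqA

theorem mem_valR_of_mkBox_mem_left (hsat : Saturated (t, D)) (hU : Interpolated (jset t) U)
    {d : Side} {α : Pm.J} {A : MBForm Pm} (hA : Truthful t U A) {p : World t} {Γ Δ ts}
    (hsub : SubAt t p.val (.node Γ Δ ts)) (hbox : mkBox d α A ∈ Γ) :
    p ∈ (mkBox d α A).valR (RCW t U) (VC t) := by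
  rw [MBForm.valR_mkBox]
  intro q hrel
  change d.rel α (RC t U p.val q.val) at hrel
  have hαJ := hsub.boxIndex_mem_jset hbox
  obtain ⟨⟨Γq, Δq, tsq⟩, hq⟩ := q.2
  refine (hA q Γq Δq tsq hq).1 ?_
  rcases RC_cases hU.1 p.val q.val with hpq | ⟨i, l, hqi, hl, hR⟩ | ⟨i, l, hpi, hl, hR⟩ | hR
  · obtain rfl : q = p := Subtype.ext hpq.symm
    cases hq.unique hsub
    have hcond : ¬((α : ℝ) = 1 ∧ d = .o) := by
      rintro ⟨h1, rfl⟩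
      exact (show (α : ℝ) < 1 by simpa [RC_self, Side.rel] using hrel).ne h1
    exact hsat.mem_left hsub (SatStep.boxLself hsub hcond hbox)
  · obtain ⟨u, hget⟩ := hsub.exists_get_of_labelAt hl
    have hpleq := l.pleq_of_rel_rcValue hU hαJ (hsub.label_mem_jset hget) (hR ▸ hrel)
    rw [hqi] at hq
    exact hsat.mem_left hq (SatStep.boxL hsub hget hq hpleq hbox)
  · obtain ⟨u, hget⟩ := hq.exists_get_of_labelAt hl
    have hpleq := l.pleq_of_rel_rcValue hU hαJ (hq.label_mem_jset hget) (hR ▸ hrel)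
    exact hsat.mem_left hq (SatStep.boxLsym hq hget (hpi ▸ hsub) hpleq hbox)
  · obtain ⟨rfl, hα0⟩ := Side.rel_zero (Pm.subI α.2).1 (hR ▸ hrel)
    obtain rfl : α = ⟨0, Pm.zero_mem⟩ := Subtype.ext hα0
    exact hsat.mem_left hq (SatStep.boxC0 hsub hbox hq)

theorem exists_rel_notMem_of_mkBox_mem_right (hnp : ¬ Provable true t)
    (hsat : Saturated (t, D)) (hwit : HasBoxWitnesses (t, D)) (hU : U.Finite)
    {d : Side} {α : Pm.J} {A : MBForm Pm} (hA : Truthful t U A) {p : World t} {Γ Δ ts}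
    (hsub : SubAt t p.val (.node Γ Δ ts)) (hbox : mkBox d α A ∈ Δ) :
    ∃ q, d.rel α (RCW t U p q) ∧ q ∉ A.valR (RCW t U) (VC t) := by
  by_cases hα1 : (α : ℝ) = 1
  · obtain rfl : α = ⟨1, Pm.one_mem⟩ := Subtype.ext hα1
    cases d
    · refine ⟨p, ?_, (hA p Γ Δ ts hsub).2 (hsat.mem_right hsub (SatStep.boxRself hsub hbox))⟩
      simp [RCW, RC_self, Side.rel]
    · exact absurd (Provable.axBoxO1 hsub hbox) hnp
  have hD : (p.val, mkBox d α A) ∈ D := by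
    by_contra hD
    exact hD (Set.insert_eq_self.mp (congrArg Prod.snd (hsat _ (SatStep.boxR hα1 hsub hbox hD))))
  obtain ⟨m, l, Γ', Δ', hl, hlα, hld, hseq, hAΔ'⟩ := hwit p.val d α A hD
  obtain ⟨ts', hsub'⟩ := exists_subAt_of_seqAt_eq hseq
  refine ⟨⟨p.val ++ [m], _, hsub'⟩, ?_, (hA _ Γ' Δ' ts' hsub').2 hAΔ'⟩
  simpa [RCW, RC_append_singleton hU hl, hlα, hld] using l.rel_rcValue hU

theorem truthful_mkBox (hnp : ¬ Provable true t) (hsat : Saturated (t, D))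
    (hwit : HasBoxWitnesses (t, D)) (hU : Interpolated (jset t) U) (d : Side) (α : Pm.J)
    {A : MBForm Pm} (hA : Truthful t U A) : Truthful t U (mkBox d α A) := by
  refine fun q Γ Δ ts hsub => ⟨mem_valR_of_mkBox_mem_left hsat hU hA hsub, fun hΔ hq => ?_⟩
  obtain ⟨q', hrel, hq'⟩ := exists_rel_notMem_of_mkBox_mem_right hnp hsat hwit hU.1 hA hsub hΔ
  rw [MBForm.valR_mkBox] at hq
  exact hq' (hq q' hrel)

theorem truthful_of_saturated (hnp : ¬ Provable true t) (hsat : Saturated (t, D))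
    (hwit : HasBoxWitnesses (t, D)) (hU : Interpolated (jset t) U) (A : MBForm Pm) :
    Truthful t U A := by
  induction A with
  | var n => exact truthful_var hnp n
  | top => exact truthful_top hnp
  | bot => exact truthful_bot hnp
  | neg A ih => exact truthful_neg hsat ih
  | conj A B ihA ihB => exact truthful_conj hnp hsat ihA ihB
  | boxc α A ih => exact truthful_mkBox hnp hsat hwit hU .c α ih
  | boxo α A ih => exact truthful_mkBox hnp hsat hwit hU .o α ih

end TruthLemma

end

/-- Truth lemma for the canonical model: for every node
`Γ' ⇒ Δ'` of the saturation, every `A ∈ Γ'` is true and every `A ∈ Δ'` is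
false at that world of the canonical model. -/
theorem truth_lemma_canonical {Pm : MBParams} (t0 : NSeq Pm)
    (h0 : ¬ Provable true t0) (s : NSeq Pm × Set (List ℕ × MBForm Pm))
    (hre : Relation.ReflTransGen SatStep (t0, (∅ : Set (List ℕ × MBForm Pm))) s)
    (hsat : Saturated s) (U : Set ℝ) (hU : Interpolated (jset s.1) U) :
    ∀ (p : World s.1) Γ Δ ts, SubAt s.1 p.val (.node Γ Δ ts) →
      (∀ A ∈ Γ, p ∈ MBForm.valR (RCW s.1 U) (VC s.1) A) ∧
      (∀ A ∈ Δ, p ∉ MBForm.valR (RCW s.1 U) (VC s.1) A) := by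
  obtain ⟨t, D⟩ := s
  have hnp : ¬ Provable true t := not_provable_of_reflTransGen hre h0
  have hwit : HasBoxWitnesses (t, D) :=
    HasBoxWitnesses.of_reflTransGen hre fun _ _ _ _ h => absurd h (Set.notMem_empty _)
  intro p Γ Δ ts hsub
  exact ⟨fun A hA => (truthful_of_saturated hnp hsat hwit hU A p Γ Δ ts hsub).1 hA,
    fun A hA => (truthful_of_saturated hnp hsat hwit hU A p Γ Δ ts hsub).2 hA⟩

end MBQL
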